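/- Let X = (y, U, H) ∈ F₀ with ‖H‖_{L^∞} ≤ M. Then there exists a constant M̄ depending only on M such that ‖X‖_E = ‖y - id‖_V + ‖U‖_{H¹} + ‖H‖_V ≤ M̄. In particular F₀ ∩ B_M ⊂ F₀ᴹ ⊂ B_{M̄}. -/

import Mathlib

open MeasureTheory

/-- `(y,U,H) ∈ F₀`: here `F₀` also includes the normalization `y + H = id`
(relabeling by `(y+H)⁻¹`), so that `ζ = y - id = -H`. -/
def InF0 (y U H : ℝ → ℝ) : Prop :=
  (∃ K : NNReal, LipschitzWith K y) ∧ (∃ K : NNReal, LipschitzWith K U) ∧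
  (∃ K : NNReal, LipschitzWith K H) ∧
  (∃ C : ℝ, ∀ x, |y x - x| ≤ C) ∧ (∃ C : ℝ, ∀ x, |H x| ≤ C) ∧
  MemLp (fun x => deriv y x - 1) 2 (volume : Measure ℝ) ∧
  MemLp (deriv H) 2 (volume : Measure ℝ) ∧
  MemLp U 2 (volume : Measure ℝ) ∧
  MemLp (deriv U) 2 (volume : Measure ℝ) ∧
  (∀ᵐ ξ ∂(volume : Measure ℝ),
    0 ≤ deriv y ξ ∧ 0 ≤ deriv H ξ ∧ deriv y ξ + deriv H ξ = 1 ∧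
    deriv y ξ * deriv H ξ = (deriv y ξ) ^ 2 * (U ξ) ^ 2 + (deriv U ξ) ^ 2) ∧
  Filter.Tendsto H Filter.atBot (nhds 0) ∧
  (∀ ξ, y ξ + H ξ = ξ)

/-- The `V`-norm `‖g‖_V = ‖g‖_{L^∞} + ‖g'‖_{L²}`. -/
noncomputable def Vnorm (g : ℝ → ℝ) : ℝ :=
  (⨆ x : ℝ, |g x|) + (∫ x : ℝ, (deriv g x) ^ 2) ^ (1/2 : ℝ)

/-- The `H¹`-norm. -/
noncomputable def H1norm (g : ℝ → ℝ) : ℝ :=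
  (∫ x : ℝ, ((g x) ^ 2 + (deriv g x) ^ 2)) ^ (1/2 : ℝ)

/-- The `E = V × H¹ × V` norm of `X = (y,U,H)`. -/
noncomputable def Enorm (y U H : ℝ → ℝ) : ℝ :=
  Vnorm (fun x => y x - x) + H1norm U + Vnorm H

/-! The constraints of `F₀` give, a.e., `H_ξ² ≤ H_ξ`, `U_ξ² ≤ H_ξ`, `|U U_ξ| ≤ H_ξ` and
`U² ≤ (1 + U²) H_ξ`. As `H` is nondecreasing with oscillation at most `2M`, integrating the first
two gives `‖H_ξ‖²_{L²} ≤ 2M` and `‖U_ξ‖²_{L²} ≤ 2M`. The third gives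
`|U(a)² - U(b)²| ≤ 2 |H(a) - H(b)| ≤ 4M`, and since `U ∈ L²` forces `inf U² = 0`, this yields
`‖U‖²_{L^∞} ≤ 4M`; the fourth then bounds `‖U‖²_{L²}` by `(1 + 4M) 2M`. Finally `y - id = -H`. -/

open Filter Set

section PointwiseConstraints

-- `p, q, u, v` stand for the values of `y_ξ, H_ξ, U, U_ξ` at a point.
variable {p q u v : ℝ}

lemma sq_le_self_of_add_eq_one (hp : 0 ≤ p) (hq : 0 ≤ q) (hpq : p + q = 1) : q ^ 2 ≤ q := by
  nlinarith

lemma sq_le_of_mul_eq (hpq : p + q = 1) (h : p * q = p ^ 2 * u ^ 2 + v ^ 2) : v ^ 2 ≤ q := by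
  nlinarith [sq_nonneg (p * u), sq_nonneg q]

lemma mul_sq_le_of_mul_eq (hp : 0 ≤ p) (hq : 0 ≤ q) (h : p * q = p ^ 2 * u ^ 2 + v ^ 2) :
    p * u ^ 2 ≤ q := by
  rcases hp.eq_or_lt with rfl | hp
  · simpa using hq
  · exact le_of_mul_le_mul_left (by nlinarith [sq_nonneg v]) hp

lemma abs_mul_le_of_mul_eq (hp : 0 ≤ p) (hq : 0 ≤ q)
    (h : p * q = p ^ 2 * u ^ 2 + v ^ 2) : |u * v| ≤ q := by
  have hv : v ^ 2 ≤ p * q := by nlinarith [sq_nonneg (p * u)]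
  have hu : p * u ^ 2 ≤ q := mul_sq_le_of_mul_eq hp hq h
  refine abs_le_of_sq_le_sq ?_ hq
  calc (u * v) ^ 2 = u ^ 2 * v ^ 2 := by ring
    _ ≤ u ^ 2 * (p * q) := by gcongr
    _ = p * u ^ 2 * q := by ring
    _ ≤ q * q := by gcongr
    _ = q ^ 2 := by ring

lemma sq_le_one_add_sq_mul_of_mul_eq (hp : 0 ≤ p) (hq : 0 ≤ q) (hpq : p + q = 1)
    (h : p * q = p ^ 2 * u ^ 2 + v ^ 2) : u ^ 2 ≤ (1 + u ^ 2) * q := by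
  nlinarith [mul_sq_le_of_mul_eq hp hq h]

end PointwiseConstraints

section Analysis

variable {u f g h : ℝ → ℝ} {K L : NNReal} {M c : ℝ}

lemma integral_le_of_ae_le_const_mul_deriv (hf : LipschitzWith K f) (hfM : ∀ x, |f x| ≤ M)
    (hc : 0 ≤ c) (hg : Integrable g) (hgf : ∀ᵐ x, g x ≤ c * deriv f x) :
    ∫ x, g x ≤ c * (2 * M) := by
  have hlim := intervalIntegral_tendsto_integral hg tendsto_neg_atTop_atBot tendsto_id
  refine le_of_tendsto hlim ((eventually_ge_atTop 0).mono fun n hn => ?_)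
  have hac : AbsolutelyContinuousOnInterval f (-n) n :=
    hf.lipschitzOnWith.absolutelyContinuousOnInterval
  calc ∫ x in -n..n, g x ≤ ∫ x in -n..n, c * deriv f x :=
        intervalIntegral.integral_mono_ae (by linarith) hg.intervalIntegrable
          (hac.intervalIntegrable_deriv.const_mul c) hgf
    _ = c * (f n - f (-n)) := by
        rw [intervalIntegral.integral_const_mul, hac.integral_deriv_eq_sub]
    _ ≤ c * (2 * M) := by
        gcongr
        linarith [abs_le.1 (hfM n), abs_le.1 (hfM (-n))]

lemma abs_sq_sub_sq_le_of_ae_abs_mul_deriv_le (hu : LipschitzWith K u) (hh : LipschitzWith L h)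
    (hae : ∀ᵐ x, |u x * deriv u x| ≤ deriv h x) {a b : ℝ} (hab : a ≤ b) :
    |u b ^ 2 - u a ^ 2| ≤ 2 * (h b - h a) := by
  have hu' : AbsolutelyContinuousOnInterval u a b :=
    hu.lipschitzOnWith.absolutelyContinuousOnInterval
  have hh' : AbsolutelyContinuousOnInterval h a b :=
    hh.lipschitzOnWith.absolutelyContinuousOnInterval
  have hsq : u b ^ 2 - u a ^ 2 = ∫ x in a..b, 2 * (u x * deriv u x) := by
    rw [sq, sq, ← hu'.integral_deriv_mul_eq_sub hu']
    congr 1 with x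
    ring
  rw [hsq, ← hh'.integral_deriv_eq_sub, ← intervalIntegral.integral_const_mul,
    ← Real.norm_eq_abs]
  refine intervalIntegral.norm_integral_le_of_norm_le hab ?_
    (hh'.intervalIntegrable_deriv.const_mul 2)
  filter_upwards [hae] with x hx _
  rw [Real.norm_eq_abs, abs_mul, abs_two]
  linarith

lemma nonpos_of_integrable_of_forall_le (hg : Integrable g) (hc : ∀ x, c ≤ g x) : c ≤ 0 := by
  by_contra! hpos
  have hconst : Integrable (fun _ : ℝ => c) :=
    hg.mono' aestronglyMeasurable_const <| ae_of_all _ fun x => by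
      rw [Real.norm_eq_abs, abs_of_pos hpos]
      exact hc x
  rcases integrable_const_iff.1 hconst with hc0 | hfin
  · exact hpos.ne' hc0
  · exact measure_ne_top volume univ Real.volume_univ

lemma sq_le_four_mul_of_ae_abs_mul_deriv_le (hu : LipschitzWith K u) (hu2 : MemLp u 2)
    (hh : LipschitzWith L h) (hhM : ∀ x, |h x| ≤ M) (hae : ∀ᵐ x, |u x * deriv u x| ≤ deriv h x)
    (x : ℝ) : u x ^ 2 ≤ 4 * M := by
  have hincr : ∀ a b, a ≤ b → |u b ^ 2 - u a ^ 2| ≤ 4 * M := fun a b hab => by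
    have := abs_sq_sub_sq_le_of_ae_abs_mul_deriv_le hu hh hae hab
    linarith [abs_le.1 (hhM a), abs_le.1 (hhM b)]
  refine sub_nonpos.1 (nonpos_of_integrable_of_forall_le hu2.integrable_sq fun t => ?_)
  rcases le_total t x with htx | hxt
  · linarith [abs_le.1 (hincr t x htx)]
  · linarith [abs_le.1 (hincr x t hxt)]

end Analysis

lemma Vnorm_nonneg (g : ℝ → ℝ) : 0 ≤ Vnorm g :=
  add_nonneg (Real.iSup_nonneg fun _ => abs_nonneg _) (Real.rpow_nonneg (integral_nonneg
    fun _ => sq_nonneg _) _)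

lemma H1norm_nonneg (g : ℝ → ℝ) : 0 ≤ H1norm g :=
  Real.rpow_nonneg (integral_nonneg fun _ => by positivity) _

lemma abs_le_Vnorm {g : ℝ → ℝ} (hg : ∃ C, ∀ x, |g x| ≤ C) (x : ℝ) : |g x| ≤ Vnorm g := by
  obtain ⟨C, hC⟩ := hg
  have hsup : |g x| ≤ ⨆ x, |g x| := le_ciSup ⟨C, by rintro _ ⟨x, rfl⟩; exact hC x⟩ x
  have hderiv : (0 : ℝ) ≤ (∫ x, deriv g x ^ 2) ^ (1 / 2 : ℝ) :=
    Real.rpow_nonneg (integral_nonneg fun _ => sq_nonneg _) _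
  unfold Vnorm
  linarith

lemma Vnorm_neg (g : ℝ → ℝ) : Vnorm (fun x => -g x) = Vnorm g := by
  simp only [Vnorm, abs_neg, deriv.fun_neg, neg_sq]

lemma Vnorm_le {g : ℝ → ℝ} {M C : ℝ} (hgM : ∀ x, |g x| ≤ M) (hC : ∫ x, deriv g x ^ 2 ≤ C) :
    Vnorm g ≤ M + C ^ (1 / 2 : ℝ) := by
  have hM : 0 ≤ M := (abs_nonneg _).trans (hgM 0)
  exact add_le_add (Real.iSup_le hgM hM) <|
    Real.rpow_le_rpow (integral_nonneg fun _ => sq_nonneg _) hC (by norm_num)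

lemma H1norm_le {g : ℝ → ℝ} (hg : MemLp g 2) (hg' : MemLp (deriv g) 2) {A B : ℝ}
    (hA : ∫ x, g x ^ 2 ≤ A) (hB : ∫ x, deriv g x ^ 2 ≤ B) :
    H1norm g ≤ (A + B) ^ (1 / 2 : ℝ) := by
  refine Real.rpow_le_rpow (integral_nonneg fun _ => by positivity) ?_ (by norm_num)
  rw [integral_add hg.integrable_sq hg'.integrable_sq]
  exact add_le_add hA hB

namespace InF0

variable {y U H : ℝ → ℝ} {M : ℝ}

lemma ae_deriv_bounds (hX : InF0 y U H) :
    ∀ᵐ ξ, 0 ≤ deriv H ξ ∧ deriv H ξ ^ 2 ≤ deriv H ξ ∧ deriv U ξ ^ 2 ≤ deriv H ξ ∧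
      |U ξ * deriv U ξ| ≤ deriv H ξ ∧ U ξ ^ 2 ≤ (1 + U ξ ^ 2) * deriv H ξ := by
  obtain ⟨-, -, -, -, -, -, -, -, -, hae, -⟩ := hX
  filter_upwards [hae] with ξ ⟨hp, hq, hpq, h⟩
  exact ⟨hq, sq_le_self_of_add_eq_one hp hq hpq, sq_le_of_mul_eq hpq h,
    abs_mul_le_of_mul_eq hp hq h, sq_le_one_add_sq_mul_of_mul_eq hp hq hpq h⟩

lemma integral_deriv_H_sq_le (hX : InF0 y U H) (hHM : ∀ ξ, |H ξ| ≤ M) :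
    ∫ ξ, deriv H ξ ^ 2 ≤ 2 * M := by
  have hbounds := hX.ae_deriv_bounds
  obtain ⟨-, -, ⟨_, hH⟩, -, -, -, hH', -⟩ := hX
  refine (integral_le_of_ae_le_const_mul_deriv hH hHM zero_le_one hH'.integrable_sq ?_).trans_eq
    (one_mul _)
  filter_upwards [hbounds] with ξ h
  linarith [h.2.1]

lemma integral_deriv_U_sq_le (hX : InF0 y U H) (hHM : ∀ ξ, |H ξ| ≤ M) :
    ∫ ξ, deriv U ξ ^ 2 ≤ 2 * M := by
  have hbounds := hX.ae_deriv_bounds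
  obtain ⟨-, -, ⟨_, hH⟩, -, -, -, -, -, hU', -⟩ := hX
  refine (integral_le_of_ae_le_const_mul_deriv hH hHM zero_le_one hU'.integrable_sq ?_).trans_eq
    (one_mul _)
  filter_upwards [hbounds] with ξ h
  linarith [h.2.2.1]

lemma sq_U_le (hX : InF0 y U H) (hHM : ∀ ξ, |H ξ| ≤ M) (ξ : ℝ) : U ξ ^ 2 ≤ 4 * M := by
  have hbounds := hX.ae_deriv_bounds
  obtain ⟨-, ⟨_, hU⟩, ⟨_, hH⟩, -, -, -, -, hU2, -⟩ := hX
  exact sq_le_four_mul_of_ae_abs_mul_deriv_le hU hU2 hH hHM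
    (hbounds.mono fun _ h => h.2.2.2.1) ξ

lemma integral_U_sq_le (hX : InF0 y U H) (hHM : ∀ ξ, |H ξ| ≤ M) :
    ∫ ξ, U ξ ^ 2 ≤ (1 + 4 * M) * (2 * M) := by
  have hbounds := hX.ae_deriv_bounds
  have hUM := hX.sq_U_le hHM
  obtain ⟨-, -, ⟨_, hH⟩, -, -, -, -, hU2, -⟩ := hX
  have hM : 0 ≤ M := (abs_nonneg _).trans (hHM 0)
  refine integral_le_of_ae_le_const_mul_deriv hH hHM (by positivity) hU2.integrable_sq ?_
  filter_upwards [hbounds] with ξ h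
  calc U ξ ^ 2 ≤ (1 + U ξ ^ 2) * deriv H ξ := h.2.2.2.2
    _ ≤ (1 + 4 * M) * deriv H ξ := by gcongr; exacts [h.1, hUM ξ]

lemma Vnorm_sub_id (hX : InF0 y U H) : Vnorm (fun x => y x - x) = Vnorm H := by
  obtain ⟨-, -, -, -, -, -, -, -, -, -, -, hsum⟩ := hX
  rw [← Vnorm_neg H]
  congr 1 with x
  linarith [hsum x]

lemma H1norm_U_le (hX : InF0 y U H) (hHM : ∀ ξ, |H ξ| ≤ M) :
    H1norm U ≤ ((1 + 4 * M) * (2 * M) + 2 * M) ^ (1 / 2 : ℝ) := by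
  have hUU := hX.integral_U_sq_le hHM
  have hU'U' := hX.integral_deriv_U_sq_le hHM
  obtain ⟨-, -, -, -, -, -, -, hU2, hU', -⟩ := hX
  exact H1norm_le hU2 hU' hUU hU'U'

lemma abs_H_le_Enorm (hX : InF0 y U H) (ξ : ℝ) : |H ξ| ≤ Enorm y U H := by
  obtain ⟨-, -, -, -, hHbdd, -⟩ := hX
  have := abs_le_Vnorm hHbdd ξ
  rw [Enorm]
  linarith [Vnorm_nonneg (fun x => y x - x), H1norm_nonneg U]

end InF0

theorem stmt10_general (M : ℝ) :
    ∃ Mbar : ℝ,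
      (∀ y U H : ℝ → ℝ, InF0 y U H → (∀ ξ, |H ξ| ≤ M) →
        Enorm y U H ≤ Mbar) ∧
      (∀ y U H : ℝ → ℝ, InF0 y U H → Enorm y U H ≤ M →
        ∀ ξ, |H ξ| ≤ M) := by
  refine ⟨2 * (M + (2 * M) ^ (1 / 2 : ℝ)) + ((1 + 4 * M) * (2 * M) + 2 * M) ^ (1 / 2 : ℝ),
    fun y U H hX hHM => ?_, fun y U H hX hE ξ => (hX.abs_H_le_Enorm ξ).trans hE⟩
  have hH : Vnorm H ≤ M + (2 * M) ^ (1 / 2 : ℝ) := Vnorm_le hHM (hX.integral_deriv_H_sq_le hHM)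
  have hU := hX.H1norm_U_le hHM
  rw [Enorm, hX.Vnorm_sub_id]
  linarith

/-- For any `X ∈ F₀ᴹ` (i.e. `X ∈ F₀` with `‖H‖_{L^∞} ≤ M`) there is a bound
`‖X‖_E ≤ M̄` with `M̄` depending only on `M`; in particular
`F₀ ∩ B_M ⊂ F₀ᴹ ⊂ B_{M̄}`. -/
theorem stmt10 (M : ℝ) (hM : 0 ≤ M) :
    ∃ Mbar : ℝ,
      (∀ y U H : ℝ → ℝ, InF0 y U H → (∀ ξ, |H ξ| ≤ M) →
        Enorm y U H ≤ Mbar) ∧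
      (∀ y U H : ℝ → ℝ, InF0 y U H → Enorm y U H ≤ M →
        ∀ ξ, |H ξ| ≤ M) :=
  stmt10_general M
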